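/- arXiv:2502.11415 — 5 statements merged into one kernel-verified Lean document; each statement's English description precedes it below -/
import Mathlib

section
/- Let ū be an open-loop optimal control for Problem (LQ) with initial value x₀, and let x̄ be its state (x̄₀ = x₀, x̄_{t+1} = A_t x̄_t + B_t ū_t). Define the costate λ backward in time by λ_{N−1} = H x̄_N and λ_{t−1} = Q_t x̄_t + S_t′ ū_t + A_t′ λ_t for t ∈ {1, …, N−1}. Then the equilibrium condition 0 = R_t ū_t + S_t x̄_t + B_t′ λ_t holds for every t ∈ {0, …, N−1}. -/
open Matrix Finset

noncomputable section

/-- State trajectory of the discrete-time linear system `x_{t+1} = A_t x_t + B_t u_t`. -/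
def lqState {n m : ℕ} (A : ℕ → Matrix (Fin n) (Fin n) ℝ) (B : ℕ → Matrix (Fin n) (Fin m) ℝ)
    (x₀ : Fin n → ℝ) (u : ℕ → Fin m → ℝ) : ℕ → Fin n → ℝ
  | 0 => x₀
  | t + 1 => A t *ᵥ lqState A B x₀ u t + B t *ᵥ u t

/-- Quadratic cost `J(x₀, u)`. -/
def lqCost {n m : ℕ} (N : ℕ) (A : ℕ → Matrix (Fin n) (Fin n) ℝ)
    (B : ℕ → Matrix (Fin n) (Fin m) ℝ) (Q : ℕ → Matrix (Fin n) (Fin n) ℝ)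
    (R : ℕ → Matrix (Fin m) (Fin m) ℝ) (S : ℕ → Matrix (Fin m) (Fin n) ℝ)
    (H : Matrix (Fin n) (Fin n) ℝ) (x₀ : Fin n → ℝ) (u : ℕ → Fin m → ℝ) : ℝ :=
  (∑ t ∈ range N,
      (lqState A B x₀ u t ⬝ᵥ Q t *ᵥ lqState A B x₀ u t
        + 2 * (u t ⬝ᵥ S t *ᵥ lqState A B x₀ u t)
        + u t ⬝ᵥ R t *ᵥ u t))
    + lqState A B x₀ u N ⬝ᵥ H *ᵥ lqState A B x₀ u N

/-- Perturbation direction of the state for a single-time control perturbation. -/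
def lqPert {n m : ℕ} (A : ℕ → Matrix (Fin n) (Fin n) ℝ) (B : ℕ → Matrix (Fin n) (Fin m) ℝ)
    (t₀ : ℕ) (v : Fin m → ℝ) : ℕ → Fin n → ℝ
  | 0 => 0
  | s + 1 => A s *ᵥ lqPert A B t₀ v s + if s = t₀ then B t₀ *ᵥ v else 0

lemma lqPert_eq_zero {n m : ℕ} (A : ℕ → Matrix (Fin n) (Fin n) ℝ)
    (B : ℕ → Matrix (Fin n) (Fin m) ℝ) (t₀ : ℕ) (v : Fin m → ℝ) :
    ∀ s, s ≤ t₀ → lqPert A B t₀ v s = 0 := by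
  intro s
  induction s with
  | zero => intro _; rfl
  | succ k ih =>
      intro hk
      have hk' : k ≠ t₀ := by omega
      simp [lqPert, ih (by omega), hk']

lemma dot_flip {a b : ℕ} (M : Matrix (Fin a) (Fin b) ℝ) (x : Fin a → ℝ) (y : Fin b → ℝ) :
    x ⬝ᵥ M *ᵥ y = y ⬝ᵥ Mᵀ *ᵥ x := by
  rw [Matrix.dotProduct_mulVec, ← Matrix.mulVec_transpose, dotProduct_comm]

lemma dot_symm {a : ℕ} {M : Matrix (Fin a) (Fin a) ℝ} (hM : M.IsSymm) (x y : Fin a → ℝ) :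
    x ⬝ᵥ M *ᵥ y = y ⬝ᵥ M *ᵥ x := by
  rw [dot_flip, hM.eq]

lemma quad_nonneg_zero (a b : ℝ) (h : ∀ ε : ℝ, 0 ≤ a * ε^2 + b * ε) : b = 0 := by
  by_contra hb
  set c : ℝ := 1/(|a|+1) with hc
  have hcpos : 0 < c := by positivity
  have h1 : (|a|+1) * c = 1 := by
    rw [hc]; field_simp
  have hac : a * c < 1 := by nlinarith [le_abs_self a]
  have h2 := h (-(b*c))
  have h3 : 0 < b^2 := by positivity
  nlinarith [mul_pos (mul_pos h3 hcpos) (sub_pos.mpr hac)]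

lemma quad_expand {a : ℕ} {M : Matrix (Fin a) (Fin a) ℝ} (hM : M.IsSymm) (x y : Fin a → ℝ) (ε : ℝ) :
    (x + ε • y) ⬝ᵥ M *ᵥ (x + ε • y)
      = x ⬝ᵥ M *ᵥ x + ε * (2 * (y ⬝ᵥ M *ᵥ x)) + ε^2 * (y ⬝ᵥ M *ᵥ y) := by
  have h := dot_symm hM x y
  simp only [Matrix.mulVec_add, Matrix.mulVec_smul, dotProduct_add, add_dotProduct,
    dotProduct_smul, smul_dotProduct, smul_eq_mul]
  linear_combination ε * h

lemma lqState_pert {n m : ℕ} (A : ℕ → Matrix (Fin n) (Fin n) ℝ)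
    (B : ℕ → Matrix (Fin n) (Fin m) ℝ) (x₀ : Fin n → ℝ) (ubar : ℕ → Fin m → ℝ)
    (t₀ : ℕ) (v : Fin m → ℝ) (ε : ℝ) :
    ∀ s, lqState A B x₀ (fun r => if r = t₀ then ubar r + ε • v else ubar r) s
      = lqState A B x₀ ubar s + ε • lqPert A B t₀ v s := by
  intro s
  induction s with
  | zero => simp [lqState, lqPert]
  | succ k ih =>
      show A k *ᵥ _ + B k *ᵥ (if k = t₀ then ubar k + ε • v else ubar k) = _
      rw [ih]
      show _ = A k *ᵥ _ + B k *ᵥ _ + ε • (A k *ᵥ _ + if k = t₀ then B t₀ *ᵥ v else 0)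
      by_cases hk : k = t₀
      · subst hk
        rw [if_pos rfl, if_pos rfl]
        simp only [Matrix.mulVec_add, Matrix.mulVec_smul, smul_add]
        abel
      · rw [if_neg hk, if_neg hk, add_zero]
        simp only [Matrix.mulVec_add, Matrix.mulVec_smul, smul_add]
        abel

lemma lq_adjoint {n m : ℕ} (N : ℕ) (A : ℕ → Matrix (Fin n) (Fin n) ℝ)
    (B : ℕ → Matrix (Fin n) (Fin m) ℝ) (Q : ℕ → Matrix (Fin n) (Fin n) ℝ)
    (S : ℕ → Matrix (Fin m) (Fin n) ℝ) (H : Matrix (Fin n) (Fin n) ℝ)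
    (x₀ : Fin n → ℝ) (ubar : ℕ → Fin m → ℝ) (lam : ℕ → Fin n → ℝ)
    (hlamN : lam (N - 1) = H *ᵥ lqState A B x₀ ubar N)
    (hlam : ∀ t, t + 1 < N →
      lam t = Q (t + 1) *ᵥ lqState A B x₀ ubar (t + 1)
        + (S (t + 1))ᵀ *ᵥ ubar (t + 1) + (A (t + 1))ᵀ *ᵥ lam (t + 1))
    (t₀ : ℕ) (v : Fin m → ℝ) :
    ∀ k t, t + 1 + k = N → t₀ ≤ t →
      (∑ s ∈ Finset.Ico (t+1) N,
          lqPert A B t₀ v s ⬝ᵥ (Q s *ᵥ lqState A B x₀ ubar s + (S s)ᵀ *ᵥ ubar s))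
        + lqPert A B t₀ v N ⬝ᵥ H *ᵥ lqState A B x₀ ubar N
      = lqPert A B t₀ v (t+1) ⬝ᵥ lam t := by
  intro k
  induction k with
  | zero =>
      intro t htN _
      have h1 : t + 1 = N := by omega
      have h2 : t = N - 1 := by omega
      rw [h1, Finset.Ico_self, Finset.sum_empty, zero_add, h2, hlamN]
  | succ k ih =>
      intro t htN hle
      have hlt : t + 1 < N := by omega
      rw [Finset.sum_eq_sum_Ico_succ_bot hlt]
      have hih := ih (t + 1) (by omega) (by omega)
      have hy : lqPert A B t₀ v (t + 1 + 1) = (A (t+1)) *ᵥ lqPert A B t₀ v (t + 1) := by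
        have : t + 1 ≠ t₀ := by omega
        simp [lqPert, this]
      rw [add_assoc, hih, hlam t hlt, hy]
      rw [dotProduct_comm (A (t+1) *ᵥ _), Matrix.dotProduct_mulVec, ← Matrix.mulVec_transpose]
      simp only [dotProduct_add]
      rw [dotProduct_comm ((A (t+1))ᵀ *ᵥ lam (t+1))]

lemma lq_cost_expand {n m : ℕ} (N : ℕ) (A : ℕ → Matrix (Fin n) (Fin n) ℝ)
    (B : ℕ → Matrix (Fin n) (Fin m) ℝ) (Q : ℕ → Matrix (Fin n) (Fin n) ℝ)
    (R : ℕ → Matrix (Fin m) (Fin m) ℝ) (S : ℕ → Matrix (Fin m) (Fin n) ℝ)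
    (H : Matrix (Fin n) (Fin n) ℝ)
    (hQ : ∀ t, (Q t).IsSymm) (hR : ∀ t, (R t).IsSymm) (hH : H.IsSymm)
    (x₀ : Fin n → ℝ) (ubar : ℕ → Fin m → ℝ) (t₀ : ℕ) (ht₀ : t₀ < N)
    (v : Fin m → ℝ) (ε : ℝ) :
    lqCost N A B Q R S H x₀ (fun r => if r = t₀ then ubar r + ε • v else ubar r)
      = lqCost N A B Q R S H x₀ ubar
        + ε * (2 * ((∑ s ∈ range N,
              lqPert A B t₀ v s ⬝ᵥ (Q s *ᵥ lqState A B x₀ ubar s + (S s)ᵀ *ᵥ ubar s))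
            + lqPert A B t₀ v N ⬝ᵥ H *ᵥ lqState A B x₀ ubar N
            + v ⬝ᵥ (R t₀ *ᵥ ubar t₀ + S t₀ *ᵥ lqState A B x₀ ubar t₀)))
        + ε^2 * ((∑ s ∈ range N,
              (lqPert A B t₀ v s ⬝ᵥ Q s *ᵥ lqPert A B t₀ v s
                + if s = t₀ then v ⬝ᵥ R t₀ *ᵥ v else 0))
            + lqPert A B t₀ v N ⬝ᵥ H *ᵥ lqPert A B t₀ v N) := by
  have hstate := lqState_pert A B x₀ ubar t₀ v ε
  unfold lqCost
  have hterm : ∀ s ∈ range N,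
      (lqState A B x₀ (fun r => if r = t₀ then ubar r + ε • v else ubar r) s
          ⬝ᵥ Q s *ᵥ lqState A B x₀ (fun r => if r = t₀ then ubar r + ε • v else ubar r) s
        + 2 * ((if s = t₀ then ubar s + ε • v else ubar s)
            ⬝ᵥ S s *ᵥ lqState A B x₀ (fun r => if r = t₀ then ubar r + ε • v else ubar r) s)
        + (if s = t₀ then ubar s + ε • v else ubar s)
            ⬝ᵥ R s *ᵥ (if s = t₀ then ubar s + ε • v else ubar s))
      = (lqState A B x₀ ubar s ⬝ᵥ Q s *ᵥ lqState A B x₀ ubar s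
          + 2 * (ubar s ⬝ᵥ S s *ᵥ lqState A B x₀ ubar s)
          + ubar s ⬝ᵥ R s *ᵥ ubar s)
        + ε * (2 * (lqPert A B t₀ v s
              ⬝ᵥ (Q s *ᵥ lqState A B x₀ ubar s + (S s)ᵀ *ᵥ ubar s))
            + if s = t₀ then
                2 * (v ⬝ᵥ (R t₀ *ᵥ ubar t₀ + S t₀ *ᵥ lqState A B x₀ ubar t₀)) else 0)
        + ε^2 * (lqPert A B t₀ v s ⬝ᵥ Q s *ᵥ lqPert A B t₀ v s
            + if s = t₀ then v ⬝ᵥ R t₀ *ᵥ v else 0) := by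
    intro s hs
    rw [hstate s]
    by_cases hst : s = t₀
    · subst hst
      rw [if_pos rfl, if_pos rfl, if_pos rfl]
      have hy0 : lqPert A B s v s = 0 := lqPert_eq_zero A B s v s le_rfl
      rw [hy0]
      have hr := dot_symm (hR s) (ubar s) v
      simp only [smul_zero, add_zero, Matrix.mulVec_add, Matrix.mulVec_smul,
        dotProduct_add, add_dotProduct, dotProduct_smul, smul_dotProduct, smul_eq_mul,
        zero_dotProduct, dotProduct_zero, Matrix.mulVec_zero, mul_zero]
      linear_combination ε * hr
    · rw [if_neg hst, if_neg hst, if_neg hst]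
      have hq := dot_symm (hQ s) (lqState A B x₀ ubar s) (lqPert A B t₀ v s)
      have hsf := dot_flip (S s) (ubar s) (lqPert A B t₀ v s)
      simp only [Matrix.mulVec_add, Matrix.mulVec_smul, dotProduct_add, add_dotProduct,
        dotProduct_smul, smul_dotProduct, smul_eq_mul, add_zero]
      linear_combination ε * hq + 2 * ε * hsf
  rw [Finset.sum_congr rfl hterm, hstate N, quad_expand hH]
  simp only [dotProduct_add, mul_add, mul_ite, mul_zero, Finset.sum_add_distrib,
    ← Finset.mul_sum, Finset.sum_ite_eq', Finset.mem_range, ht₀, if_true]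
  ring

/-- maximum-principle equilibrium condition for an open-loop optimal control. -/
theorem stmt_0 {n m : ℕ} (hn : 0 < n) (hm : 0 < m) (N : ℕ) (hN : 0 < N)
    (A : ℕ → Matrix (Fin n) (Fin n) ℝ) (B : ℕ → Matrix (Fin n) (Fin m) ℝ)
    (Q : ℕ → Matrix (Fin n) (Fin n) ℝ) (R : ℕ → Matrix (Fin m) (Fin m) ℝ)
    (S : ℕ → Matrix (Fin m) (Fin n) ℝ) (H : Matrix (Fin n) (Fin n) ℝ)
    (hQ : ∀ t, (Q t).IsSymm) (hR : ∀ t, (R t).IsSymm) (hH : H.IsSymm)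
    (x₀ : Fin n → ℝ) (ubar : ℕ → Fin m → ℝ)
    (hopt : ∀ u : ℕ → Fin m → ℝ,
      lqCost N A B Q R S H x₀ ubar ≤ lqCost N A B Q R S H x₀ u)
    (lam : ℕ → Fin n → ℝ)
    (hlamN : lam (N - 1) = H *ᵥ lqState A B x₀ ubar N)
    (hlam : ∀ t, t + 1 < N →
      lam t = Q (t + 1) *ᵥ lqState A B x₀ ubar (t + 1)
        + (S (t + 1))ᵀ *ᵥ ubar (t + 1) + (A (t + 1))ᵀ *ᵥ lam (t + 1)) :
    ∀ t < N, 0 = R t *ᵥ ubar t + S t *ᵥ lqState A B x₀ ubar t + (B t)ᵀ *ᵥ lam t := by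
  intro t₀ ht₀
  set xb := lqState A B x₀ ubar with hxb
  set w : Fin m → ℝ := R t₀ *ᵥ ubar t₀ + S t₀ *ᵥ xb t₀ + (B t₀)ᵀ *ᵥ lam t₀ with hw
  have key : ∀ v : Fin m → ℝ, v ⬝ᵥ w = 0 := by
    intro v
    -- the linear coefficient of the cost along the perturbation
    have hdir : ∀ ε : ℝ,
        0 ≤ ((∑ s ∈ range N,
              (lqPert A B t₀ v s ⬝ᵥ Q s *ᵥ lqPert A B t₀ v s
                + if s = t₀ then v ⬝ᵥ R t₀ *ᵥ v else 0))
            + lqPert A B t₀ v N ⬝ᵥ H *ᵥ lqPert A B t₀ v N) * ε^2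
          + (2 * ((∑ s ∈ range N,
              lqPert A B t₀ v s ⬝ᵥ (Q s *ᵥ xb s + (S s)ᵀ *ᵥ ubar s))
            + lqPert A B t₀ v N ⬝ᵥ H *ᵥ xb N
            + v ⬝ᵥ (R t₀ *ᵥ ubar t₀ + S t₀ *ᵥ xb t₀))) * ε := by
      intro ε
      have h := hopt (fun r => if r = t₀ then ubar r + ε • v else ubar r)
      rw [lq_cost_expand N A B Q R S H hQ hR hH x₀ ubar t₀ ht₀ v ε] at h
      linarith
    have hb := quad_nonneg_zero _ _ hdir
    -- convert the linear coefficient to `2 * (v ⬝ᵥ w)` using the costate identity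
    have hsplit : (∑ s ∈ range N,
          lqPert A B t₀ v s ⬝ᵥ (Q s *ᵥ xb s + (S s)ᵀ *ᵥ ubar s))
        = ∑ s ∈ Finset.Ico (t₀ + 1) N,
            lqPert A B t₀ v s ⬝ᵥ (Q s *ᵥ xb s + (S s)ᵀ *ᵥ ubar s) := by
      rw [Finset.range_eq_Ico, ← Finset.sum_Ico_consecutive _ (Nat.zero_le (t₀ + 1)) ht₀]
      have : ∀ s ∈ Finset.Ico 0 (t₀ + 1),
          lqPert A B t₀ v s ⬝ᵥ (Q s *ᵥ xb s + (S s)ᵀ *ᵥ ubar s) = 0 := by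
        intro s hs
        rw [lqPert_eq_zero A B t₀ v s (by simp at hs; omega), zero_dotProduct]
      rw [Finset.sum_congr rfl this, Finset.sum_const_zero, zero_add]
    have hadj := lq_adjoint N A B Q S H x₀ ubar lam hlamN hlam t₀ v (N - (t₀ + 1)) t₀
      (by omega) le_rfl
    have hy1 : lqPert A B t₀ v (t₀ + 1) = B t₀ *ᵥ v := by
      simp [lqPert, lqPert_eq_zero A B t₀ v t₀ le_rfl]
    rw [hsplit, hadj, hy1] at hb
    have hflip : (B t₀ *ᵥ v) ⬝ᵥ lam t₀ = v ⬝ᵥ (B t₀)ᵀ *ᵥ lam t₀ := by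
      rw [dotProduct_comm, dot_flip]
    rw [hflip] at hb
    have : v ⬝ᵥ w = v ⬝ᵥ (B t₀)ᵀ *ᵥ lam t₀ + v ⬝ᵥ (R t₀ *ᵥ ubar t₀ + S t₀ *ᵥ xb t₀) := by
      rw [hw]; simp only [dotProduct_add]; ring
    rw [this]
    linarith
  have hww := key w
  have : w = 0 := by
    rwa [dotProduct_self_eq_zero] at hww
  rw [hw] at this
  exact this.symm
end
end

section
/- Let (K*, v*) be a closed-loop optimal solution of Problem (LQ). Then for every initial value x₀ ∈ ℝⁿ, with x* the closed-loop state (x*₀ = x₀, x*_{t+1} = (A_t + B_t K*_t)x*_t + B_t v*_t) and λ* defined backward by λ*_{N−1} = H x*_N and λ*_{t−1} = (Q_t + S_t′K*_t) x*_t + S_t′v*_t + A_t′λ*_t for t ∈ {1,…,N−1}, the equilibrium condition 0 = (R_t K*_t + S_t) x*_t + R_t v*_t + B_t′ λ*_t holds for every t ∈ {0, …, N−1}. -/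
open Matrix Finset

noncomputable section

/-- Closed-loop state `x_{t+1} = (A_t + B_t K_t) x_t + B_t v_t`. -/
def clState {n m : ℕ} (A : ℕ → Matrix (Fin n) (Fin n) ℝ) (B : ℕ → Matrix (Fin n) (Fin m) ℝ)
    (K : ℕ → Matrix (Fin m) (Fin n) ℝ) (v : ℕ → Fin m → ℝ) (x₀ : Fin n → ℝ) :
    ℕ → Fin n → ℝ
  | 0 => x₀
  | t + 1 => (A t + B t * K t) *ᵥ clState A B K v x₀ t + B t *ᵥ v t

/-- Outcome control `u_t = K_t x_t + v_t` of a closed-loop pair. -/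
def clControl {n m : ℕ} (A : ℕ → Matrix (Fin n) (Fin n) ℝ) (B : ℕ → Matrix (Fin n) (Fin m) ℝ)
    (K : ℕ → Matrix (Fin m) (Fin n) ℝ) (v : ℕ → Fin m → ℝ) (x₀ : Fin n → ℝ) (t : ℕ) :
    Fin m → ℝ :=
  K t *ᵥ clState A B K v x₀ t + v t

/-- symmetric dot product swap -/
lemma dot_symm_aux {k : ℕ} (M : Matrix (Fin k) (Fin k) ℝ) (hM : M.IsSymm) (a b : Fin k → ℝ) :
    a ⬝ᵥ M *ᵥ b = b ⬝ᵥ M *ᵥ a := by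
  rw [dotProduct_mulVec, ← mulVec_transpose, hM.eq, dotProduct_comm]

/-- move a matrix to the other side of a dot product -/
lemma dot_trans_aux {k l : ℕ} (M : Matrix (Fin k) (Fin l) ℝ) (a : Fin k → ℝ) (b : Fin l → ℝ) :
    (M *ᵥ b) ⬝ᵥ a = b ⬝ᵥ Mᵀ *ᵥ a := by
  rw [dotProduct_mulVec, vecMul_transpose]

/-- if `ε ↦ εL + ε²M` is nonnegative then `L = 0` -/
lemma linear_zero_aux (L M : ℝ) (h : ∀ ε : ℝ, 0 ≤ ε * L + ε ^ 2 * M) : L = 0 := by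
  by_contra hL
  set c : ℝ := |M| + 1 with hc
  have h1 := h (-L / c)
  have hMc : (0 : ℝ) < c := by positivity
  have h2 : M ≤ |M| := le_abs_self M
  have h3 : L ^ 2 > 0 := by positivity
  have key : (-L / c * L + (-L / c) ^ 2 * M) * c ^ 2 = -L ^ 2 * c + L ^ 2 * M := by
    field_simp
  nlinarith [mul_nonneg h1 (sq_nonneg c)]

/-- linearity of the state trajectory -/
lemma lqState_add_smul_aux {n m : ℕ} (A : ℕ → Matrix (Fin n) (Fin n) ℝ)
    (B : ℕ → Matrix (Fin n) (Fin m) ℝ) (x₀ y₀ : Fin n → ℝ) (u e : ℕ → Fin m → ℝ) (ε : ℝ) :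
    ∀ t, lqState A B (x₀ + ε • y₀) (fun s => u s + ε • e s) t
      = lqState A B x₀ u t + ε • lqState A B y₀ e t := by
  intro t
  induction t with
  | zero => rfl
  | succ t ih =>
    show A t *ᵥ _ + B t *ᵥ _ = _
    rw [ih]
    show _ = A t *ᵥ lqState A B x₀ u t + B t *ᵥ u t
      + ε • (A t *ᵥ lqState A B y₀ e t + B t *ᵥ e t)
    simp only [mulVec_add, mulVec_smul, smul_add]
    abel

/-- equilibrium condition along the optimal closed-loop trajectory. -/
theorem stmt_1 {n m : ℕ} (hn : 0 < n) (hm : 0 < m) (N : ℕ) (hN : 0 < N)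
    (A : ℕ → Matrix (Fin n) (Fin n) ℝ) (B : ℕ → Matrix (Fin n) (Fin m) ℝ)
    (Q : ℕ → Matrix (Fin n) (Fin n) ℝ) (R : ℕ → Matrix (Fin m) (Fin m) ℝ)
    (S : ℕ → Matrix (Fin m) (Fin n) ℝ) (H : Matrix (Fin n) (Fin n) ℝ)
    (hQ : ∀ t, (Q t).IsSymm) (hR : ∀ t, (R t).IsSymm) (hH : H.IsSymm)
    (Kstar : ℕ → Matrix (Fin m) (Fin n) ℝ) (vstar : ℕ → Fin m → ℝ)
    (hopt : ∀ x₀ : Fin n → ℝ, ∀ u : ℕ → Fin m → ℝ,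
      lqCost N A B Q R S H x₀ (clControl A B Kstar vstar x₀)
        ≤ lqCost N A B Q R S H x₀ u) :
    ∀ x₀ : Fin n → ℝ, ∀ lam : ℕ → Fin n → ℝ,
      lam (N - 1) = H *ᵥ clState A B Kstar vstar x₀ N →
      (∀ t, t + 1 < N →
        lam t = (Q (t + 1) + (S (t + 1))ᵀ * Kstar (t + 1)) *ᵥ clState A B Kstar vstar x₀ (t + 1)
          + (S (t + 1))ᵀ *ᵥ vstar (t + 1) + (A (t + 1))ᵀ *ᵥ lam (t + 1)) →
      ∀ t < N,
        0 = (R t * Kstar t + S t) *ᵥ clState A B Kstar vstar x₀ t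
          + R t *ᵥ vstar t + (B t)ᵀ *ᵥ lam t := by
  intro x₀ lam hterm hrec t₀ ht₀
  -- abbreviations
  set xs : ℕ → Fin n → ℝ := clState A B Kstar vstar x₀ with hxs
  set u : ℕ → Fin m → ℝ := clControl A B Kstar vstar x₀ with hu
  have hus : ∀ s, u s = Kstar s *ᵥ xs s + vstar s := fun s => rfl
  -- open-loop state with outcome control equals closed-loop state
  have hxu : ∀ s, lqState A B x₀ u s = xs s := by
    intro s
    induction s with
    | zero => rfl
    | succ s ih =>
      show A s *ᵥ lqState A B x₀ u s + B s *ᵥ u s = _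
      rw [ih, hus]
      show _ = (A s + B s * Kstar s) *ᵥ xs s + B s *ᵥ vstar s
      simp only [add_mulVec, mulVec_add, mulVec_mulVec]
      abel
  set target : Fin m → ℝ :=
    (R t₀ * Kstar t₀ + S t₀) *ᵥ xs t₀ + R t₀ *ᵥ vstar t₀ + (B t₀)ᵀ *ᵥ lam t₀ with htarget
  suffices hall : ∀ w : Fin m → ℝ, w ⬝ᵥ target = 0 by
    have h0 : target ⬝ᵥ target = 0 := hall target
    exact (dotProduct_self_eq_zero.mp h0).symm
  intro w
  -- perturbation direction
  set e : ℕ → Fin m → ℝ := fun s => if s = t₀ then w else 0 with he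
  set δ : ℕ → Fin n → ℝ := lqState A B 0 e with hδ
  have hδ0 : ∀ s, s ≤ t₀ → δ s = 0 := by
    intro s hs
    induction s with
    | zero => rfl
    | succ s ih =>
      show A s *ᵥ δ s + B s *ᵥ e s = 0
      rw [ih (by omega), he]
      simp only [mulVec_zero]
      have : e s = 0 := by rw [he]; simp only [if_neg (by omega : ¬ s = t₀)]
      rw [show (if s = t₀ then w else 0) = (0 : Fin m → ℝ) from by
        simp only [if_neg (by omega : ¬ s = t₀)]]
      simp [mulVec_zero]
  have hδt : δ (t₀ + 1) = B t₀ *ᵥ w := by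
    show A t₀ *ᵥ δ t₀ + B t₀ *ᵥ e t₀ = B t₀ *ᵥ w
    rw [hδ0 t₀ le_rfl, he]
    simp
  have hδs : ∀ s, s ≠ t₀ → δ (s + 1) = A s *ᵥ δ s := by
    intro s hs
    show A s *ᵥ δ s + B s *ᵥ e s = A s *ᵥ δ s
    have : e s = 0 := by rw [he]; simp only [if_neg hs]
    rw [this]
    simp [mulVec_zero]
  -- perturbed trajectory
  have hstate : ∀ (ε : ℝ) (s : ℕ),
      lqState A B x₀ (fun s' => u s' + ε • e s') s = xs s + ε • δ s := by
    intro ε s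
    have h := lqState_add_smul_aux A B x₀ 0 u e ε s
    rw [show x₀ + ε • (0 : Fin n → ℝ) = x₀ by simp] at h
    rw [h, hxu, hδ]
  -- linear and quadratic coefficients of the cost expansion
  set Lc : ℝ := (∑ s ∈ range N,
      (δ s ⬝ᵥ Q s *ᵥ xs s + xs s ⬝ᵥ Q s *ᵥ δ s
        + 2 * (e s ⬝ᵥ S s *ᵥ xs s + u s ⬝ᵥ S s *ᵥ δ s)
        + (e s ⬝ᵥ R s *ᵥ u s + u s ⬝ᵥ R s *ᵥ e s)))
    + (δ N ⬝ᵥ H *ᵥ xs N + xs N ⬝ᵥ H *ᵥ δ N) with hLc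
  set Mc : ℝ := (∑ s ∈ range N,
      (δ s ⬝ᵥ Q s *ᵥ δ s + 2 * (e s ⬝ᵥ S s *ᵥ δ s) + e s ⬝ᵥ R s *ᵥ e s))
    + δ N ⬝ᵥ H *ᵥ δ N with hMc
  have expand : ∀ ε : ℝ, lqCost N A B Q R S H x₀ (fun s => u s + ε • e s)
      = lqCost N A B Q R S H x₀ u + ε * Lc + ε ^ 2 * Mc := by
    intro ε
    unfold lqCost
    simp only [hstate ε, hxu]
    rw [hLc, hMc]
    rw [Finset.sum_congr rfl (fun s _ => show
      (xs s + ε • δ s) ⬝ᵥ Q s *ᵥ (xs s + ε • δ s)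
        + 2 * ((u s + ε • e s) ⬝ᵥ S s *ᵥ (xs s + ε • δ s))
        + (u s + ε • e s) ⬝ᵥ R s *ᵥ (u s + ε • e s)
      = (xs s ⬝ᵥ Q s *ᵥ xs s + 2 * (u s ⬝ᵥ S s *ᵥ xs s) + u s ⬝ᵥ R s *ᵥ u s)
        + ε * (δ s ⬝ᵥ Q s *ᵥ xs s + xs s ⬝ᵥ Q s *ᵥ δ s
            + 2 * (e s ⬝ᵥ S s *ᵥ xs s + u s ⬝ᵥ S s *ᵥ δ s)
            + (e s ⬝ᵥ R s *ᵥ u s + u s ⬝ᵥ R s *ᵥ e s))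
        + ε ^ 2 * (δ s ⬝ᵥ Q s *ᵥ δ s + 2 * (e s ⬝ᵥ S s *ᵥ δ s) + e s ⬝ᵥ R s *ᵥ e s)
      from by
        simp only [mulVec_add, mulVec_smul, dotProduct_add, add_dotProduct,
          dotProduct_smul, smul_dotProduct, smul_eq_mul]
        ring)]
    rw [Finset.sum_add_distrib, Finset.sum_add_distrib, ← Finset.mul_sum, ← Finset.mul_sum]
    have hHterm : (xs N + ε • δ N) ⬝ᵥ H *ᵥ (xs N + ε • δ N)
        = xs N ⬝ᵥ H *ᵥ xs N + ε * (δ N ⬝ᵥ H *ᵥ xs N + xs N ⬝ᵥ H *ᵥ δ N)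
          + ε ^ 2 * (δ N ⬝ᵥ H *ᵥ δ N) := by
      simp only [mulVec_add, mulVec_smul, dotProduct_add, add_dotProduct,
        dotProduct_smul, smul_dotProduct, smul_eq_mul]
      ring
    rw [hHterm]
    ring
  have hineq : ∀ ε : ℝ, 0 ≤ ε * Lc + ε ^ 2 * Mc := by
    intro ε
    have h := hopt x₀ (fun s => u s + ε • e s)
    rw [expand ε] at h
    rw [← hu] at h
    linarith
  have hLzero : Lc = 0 := linear_zero_aux Lc Mc hineq
  -- the adjoint telescoping identity
  have tele : ∀ d k, k + d = N → t₀ + 1 ≤ k →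
      (∑ s ∈ Ico k N, δ s ⬝ᵥ (Q s *ᵥ xs s + (S s)ᵀ *ᵥ u s)) + δ N ⬝ᵥ H *ᵥ xs N
        = δ k ⬝ᵥ lam (k - 1) := by
    intro d
    induction d with
    | zero =>
      intro k hk _
      subst hk
      simp only [Nat.add_zero] at *
      rw [Finset.Ico_self, Finset.sum_empty, zero_add, hterm]
    | succ d ih =>
      intro k hk hkt
      have hkN : k < N := by omega
      obtain ⟨k', rfl⟩ : ∃ k', k = k' + 1 := ⟨k - 1, by omega⟩
      have ih' := ih (k' + 1 + 1) (by omega) (by omega)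
      simp only [Nat.add_sub_cancel] at ih' ⊢
      rw [Finset.sum_eq_sum_Ico_succ_bot hkN,
        add_assoc (δ (k' + 1) ⬝ᵥ (Q (k' + 1) *ᵥ xs (k' + 1) + (S (k' + 1))ᵀ *ᵥ u (k' + 1))),
        ih', hδs (k' + 1) (by omega), dot_trans_aux, ← dotProduct_add]
      congr 1
      rw [hrec k' (by omega), hus (k' + 1)]
      simp only [add_mulVec, mulVec_add, mulVec_mulVec]
      abel
  -- the sum over the full range reduces to the tail
  have hsum : (∑ s ∈ range N, δ s ⬝ᵥ (Q s *ᵥ xs s + (S s)ᵀ *ᵥ u s)) + δ N ⬝ᵥ H *ᵥ xs N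
      = w ⬝ᵥ (B t₀)ᵀ *ᵥ lam t₀ := by
    have hsplit : (∑ s ∈ Ico 0 (t₀ + 1), δ s ⬝ᵥ (Q s *ᵥ xs s + (S s)ᵀ *ᵥ u s))
        + (∑ s ∈ Ico (t₀ + 1) N, δ s ⬝ᵥ (Q s *ᵥ xs s + (S s)ᵀ *ᵥ u s))
        = ∑ s ∈ Ico 0 N, δ s ⬝ᵥ (Q s *ᵥ xs s + (S s)ᵀ *ᵥ u s) :=
      Finset.sum_Ico_consecutive _ (by omega) (by omega)
    have hzero : (∑ s ∈ Ico 0 (t₀ + 1), δ s ⬝ᵥ (Q s *ᵥ xs s + (S s)ᵀ *ᵥ u s)) = 0 := by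
      apply Finset.sum_eq_zero
      intro s hs
      rw [hδ0 s (by simp at hs; omega)]
      exact zero_dotProduct _
    rw [range_eq_Ico, ← hsplit, hzero, zero_add]
    rw [tele (N - (t₀ + 1)) (t₀ + 1) (by omega) le_rfl]
    rw [show t₀ + 1 - 1 = t₀ from rfl, hδt, dot_trans_aux]
  -- simplify Lc using symmetry
  have hLval : Lc = 2 * (w ⬝ᵥ target) := by
    rw [hLc]
    have hterm1 : ∀ s ∈ range N,
        δ s ⬝ᵥ Q s *ᵥ xs s + xs s ⬝ᵥ Q s *ᵥ δ s
          + 2 * (e s ⬝ᵥ S s *ᵥ xs s + u s ⬝ᵥ S s *ᵥ δ s)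
          + (e s ⬝ᵥ R s *ᵥ u s + u s ⬝ᵥ R s *ᵥ e s)
        = 2 * (δ s ⬝ᵥ (Q s *ᵥ xs s + (S s)ᵀ *ᵥ u s))
          + 2 * (e s ⬝ᵥ (S s *ᵥ xs s + R s *ᵥ u s)) := by
      intro s _
      rw [dot_symm_aux (Q s) (hQ s) (xs s), dot_symm_aux (R s) (hR s) (u s)]
      rw [dotProduct_add, dotProduct_add]
      rw [show u s ⬝ᵥ S s *ᵥ δ s = δ s ⬝ᵥ (S s)ᵀ *ᵥ u s from by
        rw [← dot_trans_aux, dotProduct_comm]]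
      ring
    rw [Finset.sum_congr rfl hterm1, Finset.sum_add_distrib, ← Finset.mul_sum, ← Finset.mul_sum]
    have hesum : (∑ s ∈ range N, e s ⬝ᵥ (S s *ᵥ xs s + R s *ᵥ u s))
        = w ⬝ᵥ (S t₀ *ᵥ xs t₀ + R t₀ *ᵥ u t₀) := by
      rw [Finset.sum_eq_single_of_mem t₀ (Finset.mem_range.mpr ht₀)]
      · rw [he]; simp
      · intro s _ hs
        rw [show e s = 0 from by rw [he]; simp only [if_neg hs]]
        exact zero_dotProduct _
    rw [hesum, dot_symm_aux H hH (xs N)]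
    have : (∑ s ∈ range N, δ s ⬝ᵥ (Q s *ᵥ xs s + (S s)ᵀ *ᵥ u s)) + δ N ⬝ᵥ H *ᵥ xs N
        = w ⬝ᵥ (B t₀)ᵀ *ᵥ lam t₀ := hsum
    have htv : w ⬝ᵥ target
        = w ⬝ᵥ (S t₀ *ᵥ xs t₀ + R t₀ *ᵥ u t₀) + w ⬝ᵥ (B t₀)ᵀ *ᵥ lam t₀ := by
      rw [htarget, hus t₀]
      simp only [add_mulVec, mulVec_add, mulVec_mulVec, dotProduct_add]
      ring
    rw [htv]
    linarith [this]
  rw [hLval] at hLzero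
  linarith
end
end

section
/- (Sufficiency part of Theorem 1.) Suppose there exist symmetric matrices P_t ∈ ℝ^{n×n} (t ∈ {0,…,N}) with P_N = H, matrices K_t ∈ ℝ^{m×n} and vectors v_t ∈ ℝ^m (t ∈ {0,…,N−1}) such that, writing R̂_t = R_t + B_t′P_{t+1}B_t, for every t: R̂_t is positive semidefinite, R̂_t K_t = −(B_t′P_{t+1}A_t + S_t), P_t = Q_t + A_t′P_{t+1}A_t + (A_t′P_{t+1}B_t + S_t′)K_t, and R̂_t v_t = 0. Then (K, v) is a closed-loop optimal solution of Problem (LQ), and moreover for every x₀ ∈ ℝⁿ the value function satisfies V(x₀) := inf_u J(x₀,u) = x₀′P₀x₀. -/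
open Matrix Finset

noncomputable section

/-!
Completing the square at every stage with the Riccati data shows that, for every control `u`
with state `x`,
`J(x₀, u) = x₀' P₀ x₀ + ∑ₜ (uₜ - Kₜ xₜ)' R̂ₜ (uₜ - Kₜ xₜ)`:
the stage costs plus `xₜ₊₁' Pₜ₊₁ xₜ₊₁ - xₜ' Pₜ xₜ` are exactly these squares, and the added
terms telescope to `x_N' H x_N - x₀' P₀ x₀`. Since `R̂ₜ ⪰ 0`, every control costs at least
`x₀' P₀ x₀`, and the outcome control of `(K, v)` has `uₜ - Kₜ xₜ = vₜ ∈ ker R̂ₜ`, so it attains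
this bound.
-/

section QuadraticForm

variable {ι κ μ α : Type*} [Fintype ι] [Fintype κ] [CommRing α]

lemma Matrix.IsSymm.dotProduct_mulVec_comm {M : Matrix ι ι α} (hM : M.IsSymm) (a b : ι → α) :
    a ⬝ᵥ M *ᵥ b = b ⬝ᵥ M *ᵥ a := by
  rw [dotProduct_mulVec, ← mulVec_transpose, hM.eq, dotProduct_comm]

lemma Matrix.dotProduct_transpose_mul_mul_mulVec [Fintype μ] (M : Matrix κ ι α)
    (P : Matrix κ κ α) (N : Matrix κ μ α) (x : ι → α) (y : μ → α) :
    x ⬝ᵥ (Mᵀ * P * N) *ᵥ y = (M *ᵥ x) ⬝ᵥ P *ᵥ (N *ᵥ y) := by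
  rw [Matrix.mul_assoc, ← mulVec_mulVec, ← mulVec_mulVec, dotProduct_transpose_mulVec,
    dotProduct_comm]

lemma riccati_completion_of_squares {A Q P P' : Matrix ι ι α} {B : Matrix ι κ α}
    {R : Matrix κ κ α} {S K : Matrix κ ι α} (hP' : P'.IsSymm)
    (hR' : (R + Bᵀ * P' * B).IsSymm) (hK : (R + Bᵀ * P' * B) * K = -(Bᵀ * P' * A + S))
    (hRic : P = Q + Aᵀ * P' * A + (Aᵀ * P' * B + Sᵀ) * K) (x : ι → α) (u : κ → α) :
    x ⬝ᵥ Q *ᵥ x + 2 * (u ⬝ᵥ S *ᵥ x) + u ⬝ᵥ R *ᵥ u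
        + (A *ᵥ x + B *ᵥ u) ⬝ᵥ P' *ᵥ (A *ᵥ x + B *ᵥ u) - x ⬝ᵥ P *ᵥ x
      = (u - K *ᵥ x) ⬝ᵥ (R + Bᵀ * P' * B) *ᵥ (u - K *ᵥ x) := by
  have hPx : x ⬝ᵥ P *ᵥ x = x ⬝ᵥ Q *ᵥ x + (A *ᵥ x) ⬝ᵥ P' *ᵥ (A *ᵥ x)
      + (B *ᵥ K *ᵥ x) ⬝ᵥ P' *ᵥ (A *ᵥ x) + (K *ᵥ x) ⬝ᵥ S *ᵥ x := by
    rw [hRic, add_mulVec, add_mulVec, dotProduct_add, dotProduct_add, Matrix.add_mul,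
      add_mulVec, dotProduct_add, dotProduct_transpose_mul_mul_mulVec, ← mulVec_mulVec,
      dotProduct_transpose_mul_mul_mulVec, hP'.dotProduct_mulVec_comm (A *ᵥ x) (B *ᵥ K *ᵥ x),
      ← mulVec_mulVec x Sᵀ K, dotProduct_transpose_mulVec]
    ring
  have hKx : ∀ w : κ → α, w ⬝ᵥ (R + Bᵀ * P' * B) *ᵥ (K *ᵥ x)
      = -((B *ᵥ w) ⬝ᵥ P' *ᵥ (A *ᵥ x) + w ⬝ᵥ S *ᵥ x) := fun w => by
    rw [mulVec_mulVec, hK, neg_mulVec, dotProduct_neg, add_mulVec, dotProduct_add,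
      dotProduct_transpose_mul_mul_mulVec]
  have hsquare : (u - K *ᵥ x) ⬝ᵥ (R + Bᵀ * P' * B) *ᵥ (u - K *ᵥ x)
      = u ⬝ᵥ (R + Bᵀ * P' * B) *ᵥ u - 2 * (u ⬝ᵥ (R + Bᵀ * P' * B) *ᵥ (K *ᵥ x))
        + (K *ᵥ x) ⬝ᵥ (R + Bᵀ * P' * B) *ᵥ (K *ᵥ x) := by
    rw [mulVec_sub, dotProduct_sub, sub_dotProduct, sub_dotProduct,
      hR'.dotProduct_mulVec_comm (K *ᵥ x) u]
    ring
  have hu : u ⬝ᵥ (R + Bᵀ * P' * B) *ᵥ u = u ⬝ᵥ R *ᵥ u + (B *ᵥ u) ⬝ᵥ P' *ᵥ (B *ᵥ u) := by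
    rw [add_mulVec, dotProduct_add, dotProduct_transpose_mul_mul_mulVec]
  have hnext : (A *ᵥ x + B *ᵥ u) ⬝ᵥ P' *ᵥ (A *ᵥ x + B *ᵥ u)
      = (A *ᵥ x) ⬝ᵥ P' *ᵥ (A *ᵥ x) + 2 * ((B *ᵥ u) ⬝ᵥ P' *ᵥ (A *ᵥ x))
        + (B *ᵥ u) ⬝ᵥ P' *ᵥ (B *ᵥ u) := by
    rw [mulVec_add, dotProduct_add, add_dotProduct, add_dotProduct,
      hP'.dotProduct_mulVec_comm (A *ᵥ x) (B *ᵥ u)]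
    ring
  rw [hPx, hsquare, hKx u, hKx (K *ᵥ x), hu, hnext]
  ring

end QuadraticForm

section LQ

variable {n m N : ℕ} {A : ℕ → Matrix (Fin n) (Fin n) ℝ} {B : ℕ → Matrix (Fin n) (Fin m) ℝ}
  {Q : ℕ → Matrix (Fin n) (Fin n) ℝ} {R : ℕ → Matrix (Fin m) (Fin m) ℝ}
  {S : ℕ → Matrix (Fin m) (Fin n) ℝ} {H : Matrix (Fin n) (Fin n) ℝ}
  {P : ℕ → Matrix (Fin n) (Fin n) ℝ} {K : ℕ → Matrix (Fin m) (Fin n) ℝ} {v : ℕ → Fin m → ℝ}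

theorem lqCost_eq_add_sum_completed_squares (hPsymm : ∀ t ≤ N, (P t).IsSymm) (hPN : P N = H)
    (hR' : ∀ t < N, (R t + (B t)ᵀ * P (t + 1) * B t).IsSymm)
    (hK : ∀ t < N, (R t + (B t)ᵀ * P (t + 1) * B t) * K t
      = -((B t)ᵀ * P (t + 1) * A t + S t))
    (hRic : ∀ t < N, P t = Q t + (A t)ᵀ * P (t + 1) * A t
      + ((A t)ᵀ * P (t + 1) * B t + (S t)ᵀ) * K t)
    (x₀ : Fin n → ℝ) (u : ℕ → Fin m → ℝ) :
    lqCost N A B Q R S H x₀ u = x₀ ⬝ᵥ P 0 *ᵥ x₀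
      + ∑ t ∈ range N, (u t - K t *ᵥ lqState A B x₀ u t) ⬝ᵥ
          (R t + (B t)ᵀ * P (t + 1) * B t) *ᵥ (u t - K t *ᵥ lqState A B x₀ u t) := by
  unfold lqCost
  set x := lqState A B x₀ u
  have hstep : ∀ t ∈ range N,
      (x t ⬝ᵥ Q t *ᵥ x t + 2 * (u t ⬝ᵥ S t *ᵥ x t) + u t ⬝ᵥ R t *ᵥ u t)
          + (x (t + 1) ⬝ᵥ P (t + 1) *ᵥ x (t + 1) - x t ⬝ᵥ P t *ᵥ x t)
        = (u t - K t *ᵥ x t) ⬝ᵥ (R t + (B t)ᵀ * P (t + 1) * B t) *ᵥ (u t - K t *ᵥ x t) := by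
    intro t ht
    have ht : t < N := mem_range.mp ht
    rw [← riccati_completion_of_squares (hPsymm (t + 1) ht) (hR' t ht) (hK t ht) (hRic t ht)]
    exact add_sub_assoc' _ _ _
  have hx₀ : x 0 = x₀ := rfl
  rw [← hx₀, ← sum_congr rfl hstep,
    sum_add_distrib (g := fun t => x (t + 1) ⬝ᵥ P (t + 1) *ᵥ x (t + 1) - x t ⬝ᵥ P t *ᵥ x t),
    sum_range_sub (fun t => x t ⬝ᵥ P t *ᵥ x t), hPN]
  ring

theorem lqState_clControl (x₀ : Fin n → ℝ) :
    lqState A B x₀ (clControl A B K v x₀) = clState A B K v x₀ := by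
  funext t
  induction t with
  | zero => rfl
  | succ t ih =>
    rw [lqState, clState, ih, clControl, mulVec_add, add_mulVec, mulVec_mulVec]
    abel

end LQ

theorem stmt_3_general {n m : ℕ} (N : ℕ)
    (A : ℕ → Matrix (Fin n) (Fin n) ℝ) (B : ℕ → Matrix (Fin n) (Fin m) ℝ)
    (Q : ℕ → Matrix (Fin n) (Fin n) ℝ) (R : ℕ → Matrix (Fin m) (Fin m) ℝ)
    (S : ℕ → Matrix (Fin m) (Fin n) ℝ) (H : Matrix (Fin n) (Fin n) ℝ)
    (P : ℕ → Matrix (Fin n) (Fin n) ℝ)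
    (K : ℕ → Matrix (Fin m) (Fin n) ℝ) (v : ℕ → Fin m → ℝ)
    (hPsymm : ∀ t ≤ N, (P t).IsSymm) (hPN : P N = H)
    (hpsd : ∀ t < N, (R t + (B t)ᵀ * P (t + 1) * B t).PosSemidef)
    (hK : ∀ t < N, (R t + (B t)ᵀ * P (t + 1) * B t) * K t
      = -((B t)ᵀ * P (t + 1) * A t + S t))
    (hRic : ∀ t < N, P t = Q t + (A t)ᵀ * P (t + 1) * A t
      + ((A t)ᵀ * P (t + 1) * B t + (S t)ᵀ) * K t)
    (hv : ∀ t < N, (R t + (B t)ᵀ * P (t + 1) * B t) *ᵥ v t = 0) :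
    (∀ x₀ : Fin n → ℝ, ∀ u : ℕ → Fin m → ℝ,
      lqCost N A B Q R S H x₀ (clControl A B K v x₀) ≤ lqCost N A B Q R S H x₀ u) ∧
    (∀ x₀ : Fin n → ℝ,
      sInf (Set.range fun u : ℕ → Fin m → ℝ => lqCost N A B Q R S H x₀ u)
        = x₀ ⬝ᵥ P 0 *ᵥ x₀) := by
  have hcost :=
    lqCost_eq_add_sum_completed_squares hPsymm hPN (fun t ht => (hpsd t ht).1) hK hRic
  have hlower (x₀ : Fin n → ℝ) (u : ℕ → Fin m → ℝ) :
      x₀ ⬝ᵥ P 0 *ᵥ x₀ ≤ lqCost N A B Q R S H x₀ u := by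
    rw [hcost]
    refine le_add_of_nonneg_right (sum_nonneg fun t ht => ?_)
    exact (hpsd t (mem_range.mp ht)).dotProduct_mulVec_nonneg _
  have hattained (x₀ : Fin n → ℝ) :
      lqCost N A B Q R S H x₀ (clControl A B K v x₀) = x₀ ⬝ᵥ P 0 *ᵥ x₀ := by
    rw [hcost, lqState_clControl]
    refine add_eq_left.mpr (sum_eq_zero fun t ht => ?_)
    rw [clControl, add_sub_cancel_left, hv t (mem_range.mp ht), dotProduct_zero]
  have hleast (x₀ : Fin n → ℝ) : IsLeast (Set.range fun u => lqCost N A B Q R S H x₀ u)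
      (x₀ ⬝ᵥ P 0 *ᵥ x₀) :=
    ⟨⟨_, hattained x₀⟩, Set.forall_mem_range.mpr (hlower x₀)⟩
  exact ⟨fun x₀ u => (hattained x₀).trans_le (hlower x₀ u), fun x₀ => (hleast x₀).csInf_eq⟩

/-- sufficiency part of Theorem 1. -/
theorem stmt_3 {n m : ℕ} (hn : 0 < n) (hm : 0 < m) (N : ℕ) (hN : 0 < N)
    (A : ℕ → Matrix (Fin n) (Fin n) ℝ) (B : ℕ → Matrix (Fin n) (Fin m) ℝ)
    (Q : ℕ → Matrix (Fin n) (Fin n) ℝ) (R : ℕ → Matrix (Fin m) (Fin m) ℝ)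
    (S : ℕ → Matrix (Fin m) (Fin n) ℝ) (H : Matrix (Fin n) (Fin n) ℝ)
    (hQ : ∀ t, (Q t).IsSymm) (hR : ∀ t, (R t).IsSymm) (hH : H.IsSymm)
    (P : ℕ → Matrix (Fin n) (Fin n) ℝ)
    (K : ℕ → Matrix (Fin m) (Fin n) ℝ) (v : ℕ → Fin m → ℝ)
    (hPsymm : ∀ t ≤ N, (P t).IsSymm) (hPN : P N = H)
    (hpsd : ∀ t < N, (R t + (B t)ᵀ * P (t + 1) * B t).PosSemidef)
    (hK : ∀ t < N, (R t + (B t)ᵀ * P (t + 1) * B t) * K t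
      = -((B t)ᵀ * P (t + 1) * A t + S t))
    (hRic : ∀ t < N, P t = Q t + (A t)ᵀ * P (t + 1) * A t
      + ((A t)ᵀ * P (t + 1) * B t + (S t)ᵀ) * K t)
    (hv : ∀ t < N, (R t + (B t)ᵀ * P (t + 1) * B t) *ᵥ v t = 0) :
    (∀ x₀ : Fin n → ℝ, ∀ u : ℕ → Fin m → ℝ,
      lqCost N A B Q R S H x₀ (clControl A B K v x₀) ≤ lqCost N A B Q R S H x₀ u) ∧
    (∀ x₀ : Fin n → ℝ,
      sInf (Set.range fun u : ℕ → Fin m → ℝ => lqCost N A B Q R S H x₀ u)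
        = x₀ ⬝ᵥ P 0 *ᵥ x₀) :=
  stmt_3_general N A B Q R S H P K v hPsymm hPN hpsd hK hRic hv
end
end

section
/- (Lemma 3, part (2).) If J(0, u) ≥ 0 for every control u, then for every initial value x₀ ∈ ℝⁿ the map u ↦ J(x₀, u) is a convex function on the space (ℝ^m)^N of controls. -/
open Matrix Finset

noncomputable section

lemma lqState_lin {n m : ℕ} (A : ℕ → Matrix (Fin n) (Fin n) ℝ)
    (B : ℕ → Matrix (Fin n) (Fin m) ℝ) (x₀ y₀ : Fin n → ℝ) (u v : ℕ → Fin m → ℝ)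
    (a b : ℝ) (t : ℕ) :
    lqState A B (a • x₀ + b • y₀) (a • u + b • v) t
      = a • lqState A B x₀ u t + b • lqState A B y₀ v t := by
  induction t with
  | zero => rfl
  | succ t ih =>
    show A t *ᵥ _ + B t *ᵥ _ = _
    rw [ih]
    show _ = a • (A t *ᵥ lqState A B x₀ u t + B t *ᵥ u t)
        + b • (A t *ᵥ lqState A B y₀ v t + B t *ᵥ v t)
    have : (a • u + b • v) t = a • u t + b • v t := rfl
    rw [this, mulVec_add, mulVec_add, mulVec_smul, mulVec_smul, mulVec_smul, mulVec_smul,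
      smul_add, smul_add]
    abel

/-- Bilinear expansion: for `a + b = 1`,
`(a u + b v) ⬝ M (a x + b y) + a b (u - v) ⬝ M (x - y) = a (u ⬝ M x) + b (v ⬝ M y)`. -/
lemma bil_expand {p q : ℕ} (M : Matrix (Fin p) (Fin q) ℝ) (u v : Fin p → ℝ)
    (x y : Fin q → ℝ) (a b : ℝ) (hab : a + b = 1) :
    (a • u + b • v) ⬝ᵥ M *ᵥ (a • x + b • y) + a * b * ((u - v) ⬝ᵥ M *ᵥ (x - y))
      = a * (u ⬝ᵥ M *ᵥ x) + b * (v ⬝ᵥ M *ᵥ y) := by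
  rw [mulVec_add, mulVec_sub, mulVec_smul, mulVec_smul]
  simp only [dotProduct_add, add_dotProduct, dotProduct_sub, sub_dotProduct,
    dotProduct_smul, smul_dotProduct, smul_eq_mul]
  linear_combination (a * (u ⬝ᵥ M *ᵥ x) + b * (v ⬝ᵥ M *ᵥ y)) * hab

/-- Key polarization identity for the cost. -/
lemma lqCost_key {n m : ℕ} (N : ℕ) (A : ℕ → Matrix (Fin n) (Fin n) ℝ)
    (B : ℕ → Matrix (Fin n) (Fin m) ℝ) (Q : ℕ → Matrix (Fin n) (Fin n) ℝ)
    (R : ℕ → Matrix (Fin m) (Fin m) ℝ) (S : ℕ → Matrix (Fin m) (Fin n) ℝ)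
    (H : Matrix (Fin n) (Fin n) ℝ) (x₀ : Fin n → ℝ) (u v : ℕ → Fin m → ℝ)
    (a b : ℝ) (hab : a + b = 1) :
    lqCost N A B Q R S H x₀ (a • u + b • v)
        + a * b * lqCost N A B Q R S H 0 (u - v)
      = a * lqCost N A B Q R S H x₀ u + b * lqCost N A B Q R S H x₀ v := by
  have hx : ∀ t, lqState A B x₀ (a • u + b • v) t
      = a • lqState A B x₀ u t + b • lqState A B x₀ v t := by
    intro t
    have h0 : (a • x₀ + b • x₀ : Fin n → ℝ) = x₀ := by
      rw [← add_smul, hab, one_smul]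
    conv_lhs => rw [← h0]
    exact lqState_lin A B x₀ x₀ u v a b t
  have hd : ∀ t, lqState A B 0 (u - v) t
      = lqState A B x₀ u t - lqState A B x₀ v t := by
    intro t
    have h0 : ((1:ℝ) • x₀ + (-1:ℝ) • x₀ : Fin n → ℝ) = 0 := by
      rw [← add_smul]; norm_num
    have h1 : ((1:ℝ) • u + (-1:ℝ) • v : ℕ → Fin m → ℝ) = u - v := by
      rw [one_smul, neg_one_smul]; exact (sub_eq_add_neg u v).symm
    rw [← h0, ← h1, lqState_lin, one_smul, neg_one_smul, ← sub_eq_add_neg]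
  have hterm : ∀ t, (lqState A B x₀ (a • u + b • v) t ⬝ᵥ Q t *ᵥ lqState A B x₀ (a • u + b • v) t
        + 2 * ((a • u + b • v) t ⬝ᵥ S t *ᵥ lqState A B x₀ (a • u + b • v) t)
        + (a • u + b • v) t ⬝ᵥ R t *ᵥ (a • u + b • v) t)
      + a * b * (lqState A B 0 (u - v) t ⬝ᵥ Q t *ᵥ lqState A B 0 (u - v) t
        + 2 * ((u - v) t ⬝ᵥ S t *ᵥ lqState A B 0 (u - v) t)
        + (u - v) t ⬝ᵥ R t *ᵥ (u - v) t)
      = a * (lqState A B x₀ u t ⬝ᵥ Q t *ᵥ lqState A B x₀ u t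
          + 2 * (u t ⬝ᵥ S t *ᵥ lqState A B x₀ u t) + u t ⬝ᵥ R t *ᵥ u t)
        + b * (lqState A B x₀ v t ⬝ᵥ Q t *ᵥ lqState A B x₀ v t
          + 2 * (v t ⬝ᵥ S t *ᵥ lqState A B x₀ v t) + v t ⬝ᵥ R t *ᵥ v t) := by
    intro t
    have hut : (a • u + b • v) t = a • u t + b • v t := rfl
    have hdt : (u - v) t = u t - v t := rfl
    rw [hx t, hd t, hut, hdt]
    have e1 := bil_expand (Q t) (lqState A B x₀ u t) (lqState A B x₀ v t)
      (lqState A B x₀ u t) (lqState A B x₀ v t) a b hab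
    have e2 := bil_expand (S t) (u t) (v t) (lqState A B x₀ u t) (lqState A B x₀ v t) a b hab
    have e3 := bil_expand (R t) (u t) (v t) (u t) (v t) a b hab
    linear_combination e1 + 2 * e2 + e3
  have h1 : (∑ t ∈ range N,
        (lqState A B x₀ (a • u + b • v) t ⬝ᵥ Q t *ᵥ lqState A B x₀ (a • u + b • v) t
          + 2 * ((a • u + b • v) t ⬝ᵥ S t *ᵥ lqState A B x₀ (a • u + b • v) t)
          + (a • u + b • v) t ⬝ᵥ R t *ᵥ (a • u + b • v) t))
      + a * b * (∑ t ∈ range N,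
        (lqState A B 0 (u - v) t ⬝ᵥ Q t *ᵥ lqState A B 0 (u - v) t
          + 2 * ((u - v) t ⬝ᵥ S t *ᵥ lqState A B 0 (u - v) t)
          + (u - v) t ⬝ᵥ R t *ᵥ (u - v) t))
      = a * (∑ t ∈ range N,
        (lqState A B x₀ u t ⬝ᵥ Q t *ᵥ lqState A B x₀ u t
          + 2 * (u t ⬝ᵥ S t *ᵥ lqState A B x₀ u t) + u t ⬝ᵥ R t *ᵥ u t))
        + b * (∑ t ∈ range N,
        (lqState A B x₀ v t ⬝ᵥ Q t *ᵥ lqState A B x₀ v t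
          + 2 * (v t ⬝ᵥ S t *ᵥ lqState A B x₀ v t) + v t ⬝ᵥ R t *ᵥ v t)) := by
    rw [Finset.mul_sum, Finset.mul_sum, Finset.mul_sum, ← Finset.sum_add_distrib,
      ← Finset.sum_add_distrib]
    exact Finset.sum_congr rfl (fun t _ => hterm t)
  have htail : lqState A B x₀ (a • u + b • v) N ⬝ᵥ H *ᵥ lqState A B x₀ (a • u + b • v) N
        + a * b * (lqState A B 0 (u - v) N ⬝ᵥ H *ᵥ lqState A B 0 (u - v) N)
      = a * (lqState A B x₀ u N ⬝ᵥ H *ᵥ lqState A B x₀ u N)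
        + b * (lqState A B x₀ v N ⬝ᵥ H *ᵥ lqState A B x₀ v N) := by
    rw [hx N, hd N]
    exact bil_expand H (lqState A B x₀ u N) (lqState A B x₀ v N)
      (lqState A B x₀ u N) (lqState A B x₀ v N) a b hab
  unfold lqCost
  linear_combination h1 + htail

/-- Lemma 3 part (2): nonnegativity of `J(0,·)` implies convexity of
`u ↦ J(x₀, u)` for every initial value. -/
theorem stmt_6 {n m : ℕ} (hn : 0 < n) (hm : 0 < m) (N : ℕ) (hN : 0 < N)
    (A : ℕ → Matrix (Fin n) (Fin n) ℝ) (B : ℕ → Matrix (Fin n) (Fin m) ℝ)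
    (Q : ℕ → Matrix (Fin n) (Fin n) ℝ) (R : ℕ → Matrix (Fin m) (Fin m) ℝ)
    (S : ℕ → Matrix (Fin m) (Fin n) ℝ) (H : Matrix (Fin n) (Fin n) ℝ)
    (hQ : ∀ t, (Q t).IsSymm) (hR : ∀ t, (R t).IsSymm) (hH : H.IsSymm)
    (hpos : ∀ u : ℕ → Fin m → ℝ, 0 ≤ lqCost N A B Q R S H 0 u) :
    ∀ x₀ : Fin n → ℝ,
      ConvexOn ℝ Set.univ (fun u : ℕ → Fin m → ℝ => lqCost N A B Q R S H x₀ u) := by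
  intro x₀
  refine ⟨convex_univ, fun u _ v _ a b ha hb hab => ?_⟩
  have key := lqCost_key N A B Q R S H x₀ u v a b hab
  have hnn : 0 ≤ a * b * lqCost N A B Q R S H 0 (u - v) :=
    mul_nonneg (mul_nonneg ha hb) (hpos _)
  simp only [smul_eq_mul]
  linarith
end
end

section
/- (Lemma 3, part (3).) Suppose there is a constant α > 0 such that J(0, u) ≥ α Σ_{t=0}^{N−1}|u_t|² for every control u. Then there exists a unique family of symmetric matrices P_t ∈ ℝ^{n×n} (t ∈ {0,…,N}) with P_N = H such that for every t ∈ {0,…,N−1}: R_t + B_t′P_{t+1}B_t ⪰ αI (hence invertible) and P_t = Q_t + A_t′P_{t+1}A_t − (A_t′P_{t+1}B_t + S_t′)(R_t + B_t′P_{t+1}B_t)^{−1}(B_t′P_{t+1}A_t + S_t). Moreover, setting K*_t = −(R_t + B_t′P_{t+1}B_t)^{−1}(B_t′P_{t+1}A_t + S_t), the pair (K*, 0) is a closed-loop optimal solution, and for every x₀ the control u*_t = K*_t x*_t (where x*₀ = x₀, x*_{t+1} = (A_t + B_t K*_t)x*_t) is the unique open-loop optimal control for x₀. -/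
open Matrix Finset

noncomputable section

/-- The Riccati system of Lemma 3(3): symmetric solution with `R̂_t ⪰ αI` (hence invertible)
and the generalized Riccati recursion written with the true inverse. -/
def riccatiSolStrict {n m : ℕ} (N : ℕ) (A : ℕ → Matrix (Fin n) (Fin n) ℝ)
    (B : ℕ → Matrix (Fin n) (Fin m) ℝ) (Q : ℕ → Matrix (Fin n) (Fin n) ℝ)
    (R : ℕ → Matrix (Fin m) (Fin m) ℝ) (S : ℕ → Matrix (Fin m) (Fin n) ℝ)
    (H : Matrix (Fin n) (Fin n) ℝ) (α : ℝ) (P : ℕ → Matrix (Fin n) (Fin n) ℝ) : Prop :=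
  (∀ t ≤ N, (P t).IsSymm) ∧ P N = H ∧
  ∀ t < N,
    (R t + (B t)ᵀ * P (t + 1) * B t - α • (1 : Matrix (Fin m) (Fin m) ℝ)).PosSemidef ∧
    IsUnit (R t + (B t)ᵀ * P (t + 1) * B t) ∧
    P t = Q t + (A t)ᵀ * P (t + 1) * A t
      - ((A t)ᵀ * P (t + 1) * B t + (S t)ᵀ)
        * (R t + (B t)ᵀ * P (t + 1) * B t)⁻¹ * ((B t)ᵀ * P (t + 1) * A t + S t)


/-
Write `R̂ₜ = Rₜ + BₜᵀPₜ₊₁Bₜ` and `Kₜ` for the Riccati gain. For any family `P` with `P_N = H` the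
cost telescopes to `J(x₀, u) = x₀ᵀP₀x₀ + ∑ₜ dₜ`, where `dₜ` is the stage cost plus the increment
of `xᵀPx`, and completing the square in `uₜ` gives `dₜ = (uₜ - Kₜxₜ)ᵀR̂ₜ(uₜ - Kₜxₜ)` at every step
where `P` follows the Riccati recursion. Regularity of the recursion is proved backwards: if `Pₛ₊₁` is
symmetric and `R̂ₛ` invertible for all `s > r`, the control that vanishes before `r`, equals `w` at
`r` and follows the feedback afterwards has `J(0, u) = d_r = wᵀR̂ᵣw`, so coercivity gives
`R̂ᵣ ⪰ αI`. Once all `R̂ₜ ⪰ αI`, the feedback outcome attains the lower bound `x₀ᵀP₀x₀`, and any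
minimiser has all `dₜ = 0`, i.e. `uₜ = Kₜxₜ`, so it is the feedback outcome.
-/

namespace LQ

section Step

variable {𝕜 ι κ : Type*} [CommRing 𝕜] [Fintype ι]

def lqHatR (B : Matrix ι κ 𝕜) (R : Matrix κ κ 𝕜) (X : Matrix ι ι 𝕜) : Matrix κ κ 𝕜 :=
  R + Bᵀ * X * B

def lqHatS (A : Matrix ι ι 𝕜) (B : Matrix ι κ 𝕜) (S : Matrix κ ι 𝕜) (X : Matrix ι ι 𝕜) :
    Matrix κ ι 𝕜 :=
  Bᵀ * X * A + S

theorem isSymm_lqHatR {B : Matrix ι κ 𝕜} {R : Matrix κ κ 𝕜} {X : Matrix ι ι 𝕜}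
    (hR : R.IsSymm) (hX : X.IsSymm) : (lqHatR B R X).IsSymm := by
  simp only [Matrix.IsSymm, lqHatR, transpose_add, transpose_mul, transpose_transpose, hR.eq,
    hX.eq, Matrix.mul_assoc]

theorem transpose_lqHatS {A : Matrix ι ι 𝕜} {B : Matrix ι κ 𝕜} {S : Matrix κ ι 𝕜}
    {X : Matrix ι ι 𝕜} (hX : X.IsSymm) : (lqHatS A B S X)ᵀ = Aᵀ * X * B + Sᵀ := by
  simp only [lqHatS, transpose_add, transpose_mul, transpose_transpose, hX.eq, Matrix.mul_assoc]

variable [Fintype κ]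

def stageCost (Q : Matrix ι ι 𝕜) (R : Matrix κ κ 𝕜) (S : Matrix κ ι 𝕜) (x : ι → 𝕜)
    (u : κ → 𝕜) : 𝕜 :=
  x ⬝ᵥ Q *ᵥ x + 2 * (u ⬝ᵥ S *ᵥ x) + u ⬝ᵥ R *ᵥ u

theorem dotProduct_transpose_mul_mul_mulVec {ι' : Type*} [Fintype ι'] (C : Matrix ι κ 𝕜)
    (X : Matrix ι ι 𝕜) (D : Matrix ι ι' 𝕜) (a : κ → 𝕜) (b : ι' → 𝕜) :
    a ⬝ᵥ (Cᵀ * X * D) *ᵥ b = (C *ᵥ a) ⬝ᵥ X *ᵥ (D *ᵥ b) := by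
  rw [← mulVec_mulVec, ← mulVec_mulVec, dotProduct_transpose_mulVec, dotProduct_comm]

theorem stageCost_add_eq (A : Matrix ι ι 𝕜) (B : Matrix ι κ 𝕜) (Q : Matrix ι ι 𝕜)
    (R : Matrix κ κ 𝕜) (S : Matrix κ ι 𝕜) {X : Matrix ι ι 𝕜} (hX : X.IsSymm) (x : ι → 𝕜)
    (u : κ → 𝕜) :
    stageCost Q R S x u + (A *ᵥ x + B *ᵥ u) ⬝ᵥ X *ᵥ (A *ᵥ x + B *ᵥ u)
      = x ⬝ᵥ (Q + Aᵀ * X * A) *ᵥ x + u ⬝ᵥ lqHatR B R X *ᵥ u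
        + 2 * (u ⬝ᵥ lqHatS A B S X *ᵥ x) := by
  have hcross : (A *ᵥ x) ⬝ᵥ X *ᵥ (B *ᵥ u) = (B *ᵥ u) ⬝ᵥ X *ᵥ (A *ᵥ x) := by
    rw [← dotProduct_transpose_mulVec, hX.eq]
  simp only [stageCost, lqHatR, lqHatS, add_mulVec, mulVec_add, dotProduct_add, add_dotProduct,
    dotProduct_transpose_mul_mul_mulVec, hcross]
  ring

theorem stageCost_zero_add (A : Matrix ι ι 𝕜) (B : Matrix ι κ 𝕜) (Q : Matrix ι ι 𝕜)
    (R : Matrix κ κ 𝕜) (S : Matrix κ ι 𝕜) (X : Matrix ι ι 𝕜) (u : κ → 𝕜) :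
    stageCost Q R S 0 u + (A *ᵥ 0 + B *ᵥ u) ⬝ᵥ X *ᵥ (A *ᵥ 0 + B *ᵥ u)
      = u ⬝ᵥ lqHatR B R X *ᵥ u := by
  simp [stageCost, lqHatR, add_mulVec, dotProduct_add, dotProduct_transpose_mul_mul_mulVec]

variable [DecidableEq κ]

theorem dotProduct_mulVec_add_two_mul_eq {M : Matrix κ κ 𝕜} (hM : M.IsSymm)
    (hU : IsUnit M) (L : Matrix κ ι 𝕜) (x : ι → 𝕜) (u : κ → 𝕜) :
    u ⬝ᵥ M *ᵥ u + 2 * (u ⬝ᵥ L *ᵥ x)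
      = (u + (M⁻¹ * L) *ᵥ x) ⬝ᵥ M *ᵥ (u + (M⁻¹ * L) *ᵥ x) - x ⬝ᵥ (Lᵀ * M⁻¹ * L) *ᵥ x := by
  set y := (M⁻¹ * L) *ᵥ x
  have hMy : M *ᵥ y = L *ᵥ x := by
    rw [mulVec_mulVec, mul_nonsing_inv_cancel_left _ _ ((isUnit_iff_isUnit_det M).1 hU)]
  have hyMu : y ⬝ᵥ M *ᵥ u = u ⬝ᵥ L *ᵥ x := by
    rw [← dotProduct_transpose_mulVec, hM.eq, hMy]
  have hyMy : y ⬝ᵥ M *ᵥ y = x ⬝ᵥ (Lᵀ * M⁻¹ * L) *ᵥ x := by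
    rw [hMy, ← dotProduct_transpose_mulVec, Matrix.mul_assoc, ← mulVec_mulVec]
  rw [mulVec_add, dotProduct_add, add_dotProduct, add_dotProduct, hyMy, hyMu, hMy]
  ring

-- Written exactly as the recursion in `riccatiSolStrict` (not with `(lqHatS A B S X)ᵀ`), so that
-- `riccatiSeq` satisfies that recursion definitionally.
def riccatiMap (A : Matrix ι ι 𝕜) (B : Matrix ι κ 𝕜) (Q : Matrix ι ι 𝕜) (R : Matrix κ κ 𝕜)
    (S : Matrix κ ι 𝕜) (X : Matrix ι ι 𝕜) : Matrix ι ι 𝕜 :=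
  Q + Aᵀ * X * A - (Aᵀ * X * B + Sᵀ) * (lqHatR B R X)⁻¹ * lqHatS A B S X

def riccatiGain (A : Matrix ι ι 𝕜) (B : Matrix ι κ 𝕜) (R : Matrix κ κ 𝕜) (S : Matrix κ ι 𝕜)
    (X : Matrix ι ι 𝕜) : Matrix κ ι 𝕜 :=
  -((lqHatR B R X)⁻¹ * lqHatS A B S X)

theorem isSymm_riccatiMap {A : Matrix ι ι 𝕜} {B : Matrix ι κ 𝕜} {Q : Matrix ι ι 𝕜}
    {R : Matrix κ κ 𝕜} {S : Matrix κ ι 𝕜} {X : Matrix ι ι 𝕜} (hQ : Q.IsSymm) (hR : R.IsSymm)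
    (hX : X.IsSymm) : (riccatiMap A B Q R S X).IsSymm := by
  have hinv : (lqHatR B R X)⁻¹ᵀ = (lqHatR B R X)⁻¹ := by
    rw [transpose_nonsing_inv, (isSymm_lqHatR hR hX).eq]
  rw [Matrix.IsSymm, riccatiMap, ← transpose_lqHatS hX]
  simp only [transpose_sub, transpose_add, transpose_mul, transpose_transpose, hQ.eq, hX.eq, hinv,
    Matrix.mul_assoc]

theorem stageCost_add_eq_riccatiMap (A : Matrix ι ι 𝕜) (B : Matrix ι κ 𝕜) (Q : Matrix ι ι 𝕜)
    {R : Matrix κ κ 𝕜} (S : Matrix κ ι 𝕜) {X : Matrix ι ι 𝕜} (hR : R.IsSymm) (hX : X.IsSymm)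
    (hU : IsUnit (lqHatR B R X)) (x : ι → 𝕜) (u : κ → 𝕜) :
    stageCost Q R S x u + (A *ᵥ x + B *ᵥ u) ⬝ᵥ X *ᵥ (A *ᵥ x + B *ᵥ u)
      = x ⬝ᵥ riccatiMap A B Q R S X *ᵥ x
        + (u - riccatiGain A B R S X *ᵥ x) ⬝ᵥ lqHatR B R X *ᵥ (u - riccatiGain A B R S X *ᵥ x) := by
  rw [stageCost_add_eq A B Q R S hX, add_assoc,
    dotProduct_mulVec_add_two_mul_eq (isSymm_lqHatR hR hX) hU, riccatiMap, riccatiGain,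
    ← transpose_lqHatS hX, neg_mulVec, sub_neg_eq_add, sub_mulVec, dotProduct_sub]
  ring

end Step

section Coercive

variable {κ : Type*} [Fintype κ]

theorem dotProduct_mulVec_nonneg_of_coercive {M : Matrix κ κ ℝ} {α : ℝ} (hα : 0 ≤ α)
    (h : ∀ w, α * (w ⬝ᵥ w) ≤ w ⬝ᵥ M *ᵥ w) (w : κ → ℝ) : 0 ≤ w ⬝ᵥ M *ᵥ w :=
  (mul_nonneg hα (by simpa using dotProduct_star_self_nonneg w)).trans (h w)

theorem eq_zero_of_coercive {M : Matrix κ κ ℝ} {α : ℝ} (hα : 0 < α)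
    (h : ∀ w, α * (w ⬝ᵥ w) ≤ w ⬝ᵥ M *ᵥ w) {w : κ → ℝ} (hw : w ⬝ᵥ M *ᵥ w ≤ 0) : w = 0 := by
  have hnn : 0 ≤ w ⬝ᵥ w := by simpa using dotProduct_star_self_nonneg w
  exact dotProduct_self_eq_zero.1 (by nlinarith [h w])

theorem isUnit_of_coercive [DecidableEq κ] {M : Matrix κ κ ℝ} {α : ℝ} (hα : 0 < α)
    (h : ∀ w, α * (w ⬝ᵥ w) ≤ w ⬝ᵥ M *ᵥ w) : IsUnit M :=
  mulVec_injective_iff_isUnit.1 fun a b hab => sub_eq_zero.1 <| eq_zero_of_coercive hα h <| by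
    rw [mulVec_sub, hab, sub_self, dotProduct_zero]

theorem posSemidef_sub_smul_one_iff [DecidableEq κ] {M : Matrix κ κ ℝ} (hM : M.IsSymm) (α : ℝ) :
    (M - α • 1).PosSemidef ↔ ∀ w, α * (w ⬝ᵥ w) ≤ w ⬝ᵥ M *ᵥ w := by
  have hherm : (M - α • 1).IsHermitian := by
    simp only [Matrix.IsHermitian, conjTranspose_eq_transpose_of_trivial, transpose_sub, hM.eq,
      transpose_smul, transpose_one]
  simp only [posSemidef_iff_dotProduct_mulVec, hherm, true_and, star_trivial, sub_mulVec,
    dotProduct_sub, smul_mulVec, one_mulVec, dotProduct_smul, smul_eq_mul, sub_nonneg]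

end Coercive

section Horizon

variable {n m N : ℕ} {A : ℕ → Matrix (Fin n) (Fin n) ℝ} {B : ℕ → Matrix (Fin n) (Fin m) ℝ}
  {Q : ℕ → Matrix (Fin n) (Fin n) ℝ} {R : ℕ → Matrix (Fin m) (Fin m) ℝ}
  {S : ℕ → Matrix (Fin m) (Fin n) ℝ} {H : Matrix (Fin n) (Fin n) ℝ}

theorem lqState_clControl (K : ℕ → Matrix (Fin m) (Fin n) ℝ) (v : ℕ → Fin m → ℝ)
    (x₀ : Fin n → ℝ) : lqState A B x₀ (clControl A B K v x₀) = clState A B K v x₀ := by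
  funext t
  induction t with
  | zero => rfl
  | succ t ih =>
    simp only [lqState, clState, ih, clControl, add_mulVec, mulVec_add, mulVec_mulVec, add_assoc]

theorem lqState_eq_clState {K : ℕ → Matrix (Fin m) (Fin n) ℝ} {v u : ℕ → Fin m → ℝ}
    {x₀ : Fin n → ℝ} {T : ℕ} (h : ∀ t < T, u t = K t *ᵥ lqState A B x₀ u t + v t) :
    ∀ t ≤ T, lqState A B x₀ u t = clState A B K v x₀ t
  | 0, _ => rfl
  | t + 1, ht => by
    simp only [lqState, clState, h t ht, lqState_eq_clState h t (Nat.le_of_succ_le ht),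
      add_mulVec, mulVec_add, mulVec_mulVec, add_assoc]

theorem clState_zero_eq_zero {K : ℕ → Matrix (Fin m) (Fin n) ℝ} {v : ℕ → Fin m → ℝ} {r : ℕ}
    (hv : ∀ t < r, v t = 0) : ∀ t ≤ r, clState A B K v 0 t = 0
  | 0, _ => rfl
  | t + 1, ht => by
    rw [clState, clState_zero_eq_zero hv t (Nat.le_of_succ_le ht), hv t ht]
    simp

theorem lqCost_eq_add_sum {P : ℕ → Matrix (Fin n) (Fin n) ℝ} (hP : P N = H) {x₀ : Fin n → ℝ}
    {u : ℕ → Fin m → ℝ} {d : ℕ → ℝ}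
    (hd : ∀ t < N, stageCost (Q t) (R t) (S t) (lqState A B x₀ u t) (u t)
        + lqState A B x₀ u (t + 1) ⬝ᵥ P (t + 1) *ᵥ lqState A B x₀ u (t + 1)
      = lqState A B x₀ u t ⬝ᵥ P t *ᵥ lqState A B x₀ u t + d t) :
    lqCost N A B Q R S H x₀ u = x₀ ⬝ᵥ P 0 *ᵥ x₀ + ∑ t ∈ range N, d t := by
  set V : ℕ → ℝ := fun t => lqState A B x₀ u t ⬝ᵥ P t *ᵥ lqState A B x₀ u t
  have hsum : ∑ t ∈ range N, d t
      = ∑ t ∈ range N, stageCost (Q t) (R t) (S t) (lqState A B x₀ u t) (u t) + (V N - V 0) := by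
    rw [← sum_range_sub, ← sum_add_distrib]
    exact sum_congr rfl fun t ht => by linarith [hd t (mem_range.1 ht)]
  rw [hsum]
  simp only [lqCost, stageCost, V, hP]
  rw [lqState]
  ring

def riccatiSeq (N : ℕ) (A : ℕ → Matrix (Fin n) (Fin n) ℝ) (B : ℕ → Matrix (Fin n) (Fin m) ℝ)
    (Q : ℕ → Matrix (Fin n) (Fin n) ℝ) (R : ℕ → Matrix (Fin m) (Fin m) ℝ)
    (S : ℕ → Matrix (Fin m) (Fin n) ℝ) (H : Matrix (Fin n) (Fin n) ℝ) (t : ℕ) :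
    Matrix (Fin n) (Fin n) ℝ :=
  if h : N ≤ t then H
  else riccatiMap (A t) (B t) (Q t) (R t) (S t) (riccatiSeq N A B Q R S H (t + 1))
termination_by N - t

theorem riccatiSeq_of_le {t : ℕ} (ht : N ≤ t) : riccatiSeq N A B Q R S H t = H := by
  rw [riccatiSeq, dif_pos ht]

theorem riccatiSeq_of_lt {t : ℕ} (ht : t < N) :
    riccatiSeq N A B Q R S H t
      = riccatiMap (A t) (B t) (Q t) (R t) (S t) (riccatiSeq N A B Q R S H (t + 1)) := by
  rw [riccatiSeq, dif_neg (not_le.2 ht)]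

def riccatiGainSeq (A : ℕ → Matrix (Fin n) (Fin n) ℝ) (B : ℕ → Matrix (Fin n) (Fin m) ℝ)
    (R : ℕ → Matrix (Fin m) (Fin m) ℝ) (S : ℕ → Matrix (Fin m) (Fin n) ℝ)
    (P : ℕ → Matrix (Fin n) (Fin n) ℝ) (t : ℕ) : Matrix (Fin m) (Fin n) ℝ :=
  riccatiGain (A t) (B t) (R t) (S t) (P (t + 1))

theorem lqHatR_coercive (hR : ∀ t, (R t).IsSymm) {α : ℝ} (hα : 0 ≤ α)
    (hcoer : ∀ u : ℕ → Fin m → ℝ, α * ∑ t ∈ range N, u t ⬝ᵥ u t ≤ lqCost N A B Q R S H 0 u)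
    {P : ℕ → Matrix (Fin n) (Fin n) ℝ} (hPN : P N = H) {r : ℕ} (hr : r < N)
    (hrec : ∀ t, r < t → t < N → P t = riccatiMap (A t) (B t) (Q t) (R t) (S t) (P (t + 1)))
    (hsym : ∀ t, r < t → t < N → (P (t + 1)).IsSymm)
    (hunit : ∀ t, r < t → t < N → IsUnit (lqHatR (B t) (R t) (P (t + 1)))) (w : Fin m → ℝ) :
    α * (w ⬝ᵥ w) ≤ w ⬝ᵥ lqHatR (B r) (R r) (P (r + 1)) *ᵥ w := by
  set K := riccatiGainSeq A B R S P
  set v : ℕ → Fin m → ℝ := Pi.single r w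
  set u := clControl A B K v 0
  have hxcl : lqState A B 0 u = clState A B K v 0 := lqState_clControl K v 0
  have hu : ∀ t, u t
      = riccatiGain (A t) (B t) (R t) (S t) (P (t + 1)) *ᵥ lqState A B 0 u t + v t := fun t => by
    rw [hxcl]; rfl
  have hx : ∀ t ≤ r, lqState A B 0 u t = 0 := by
    rw [hxcl]
    exact clState_zero_eq_zero fun t ht => Pi.single_eq_of_ne ht.ne _
  have hcost : lqCost N A B Q R S H 0 u
      = ∑ t ∈ range N, v t ⬝ᵥ lqHatR (B t) (R t) (P (t + 1)) *ᵥ v t := by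
    rw [lqCost_eq_add_sum hPN (fun t ht => ?_), zero_dotProduct, zero_add]
    simp only [lqState]
    rcases le_or_gt t r with htr | htr
    · rw [hx t htr, hu t, hx t htr, mulVec_zero, zero_add, stageCost_zero_add, zero_dotProduct,
        zero_add]
    · rw [hrec t htr ht, stageCost_add_eq_riccatiMap _ _ _ _ (hR t) (hsym t htr ht)
        (hunit t htr ht), hu t, add_sub_cancel_left]
  have hsum : ∑ t ∈ range N, v t ⬝ᵥ lqHatR (B t) (R t) (P (t + 1)) *ᵥ v t
      = w ⬝ᵥ lqHatR (B r) (R r) (P (r + 1)) *ᵥ w := by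
    rw [sum_eq_single_of_mem r (mem_range.2 hr) fun t _ ht => by simp [v, Pi.single_eq_of_ne ht]]
    simp [v]
  have hur : u r = w := by simp [hu r, hx r le_rfl, v]
  calc α * (w ⬝ᵥ w) ≤ α * ∑ t ∈ range N, u t ⬝ᵥ u t := by
        gcongr
        rw [← hur]
        exact single_le_sum (f := fun t => u t ⬝ᵥ u t)
          (fun t _ => by simpa using dotProduct_star_self_nonneg (u t)) (mem_range.2 hr)
    _ ≤ _ := hcoer u
    _ = _ := hcost.trans hsum

theorem riccatiSeq_isSymm_and_coercive (hQ : ∀ t, (Q t).IsSymm) (hR : ∀ t, (R t).IsSymm)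
    (hH : H.IsSymm) {α : ℝ} (hα : 0 < α)
    (hcoer : ∀ u : ℕ → Fin m → ℝ, α * ∑ t ∈ range N, u t ⬝ᵥ u t ≤ lqCost N A B Q R S H 0 u)
    {t : ℕ} (ht : t ≤ N) :
    (riccatiSeq N A B Q R S H t).IsSymm ∧ (t < N → ∀ w : Fin m → ℝ,
      α * (w ⬝ᵥ w) ≤ w ⬝ᵥ lqHatR (B t) (R t) (riccatiSeq N A B Q R S H (t + 1)) *ᵥ w) := by
  set P := riccatiSeq N A B Q R S H with hP
  suffices h : ∀ s, t ≤ s → s ≤ N → (P s).IsSymm ∧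
      (s < N → ∀ w, α * (w ⬝ᵥ w) ≤ w ⬝ᵥ lqHatR (B s) (R s) (P (s + 1)) *ᵥ w) from
    h t le_rfl ht
  induction ht using Nat.decreasingInduction with
  | self =>
    intro s hNs hsN
    obtain rfl := le_antisymm hsN hNs
    exact ⟨by rwa [hP, riccatiSeq_of_le le_rfl], fun h => absurd h (lt_irrefl _)⟩
  | of_succ r hr ih =>
    intro s hrs hsN
    rcases hrs.eq_or_lt with rfl | hrs
    · have hsym : (P (r + 1)).IsSymm := (ih (r + 1) le_rfl hr).1
      refine ⟨by rw [hP, riccatiSeq_of_lt hr]; exact isSymm_riccatiMap (hQ r) (hR r) hsym,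
        fun _ => ?_⟩
      exact lqHatR_coercive hR hα.le hcoer (riccatiSeq_of_le le_rfl) hr
        (fun t _ ht => riccatiSeq_of_lt ht) (fun t hst ht => (ih (t + 1) (by omega) ht).1)
        (fun t hst ht => isUnit_of_coercive hα ((ih t hst ht.le).2 ht))
    · exact ih s hrs hsN

theorem riccatiSolStrict_riccatiSeq (hQ : ∀ t, (Q t).IsSymm) (hR : ∀ t, (R t).IsSymm)
    (hH : H.IsSymm) {α : ℝ} (hα : 0 < α)
    (hcoer : ∀ u : ℕ → Fin m → ℝ, α * ∑ t ∈ range N, u t ⬝ᵥ u t ≤ lqCost N A B Q R S H 0 u) :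
    riccatiSolStrict N A B Q R S H α (riccatiSeq N A B Q R S H) := by
  have hreg {t : ℕ} (ht : t ≤ N) := riccatiSeq_isSymm_and_coercive hQ hR hH hα hcoer ht
  refine ⟨fun t ht => (hreg ht).1, riccatiSeq_of_le le_rfl,
    fun t ht => ⟨?_, ?_, riccatiSeq_of_lt ht⟩⟩
  · exact (posSemidef_sub_smul_one_iff (isSymm_lqHatR (hR t) (hreg ht).1) α).2 ((hreg ht.le).2 ht)
  · exact isUnit_of_coercive hα ((hreg ht.le).2 ht)

section Solution

variable {α : ℝ} {P : ℕ → Matrix (Fin n) (Fin n) ℝ}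

theorem eq_of_riccatiSolStrict {P' : ℕ → Matrix (Fin n) (Fin n) ℝ}
    (hP : riccatiSolStrict N A B Q R S H α P) (hP' : riccatiSolStrict N A B Q R S H α P')
    {t : ℕ} (ht : t ≤ N) : P' t = P t := by
  induction ht using Nat.decreasingInduction with
  | self => exact hP'.2.1.trans hP.2.1.symm
  | of_succ t ht ih => rw [(hP'.2.2 t ht).2.2, (hP.2.2 t ht).2.2, ih]

theorem coercive_of_riccatiSolStrict (hR : ∀ t, (R t).IsSymm)
    (hP : riccatiSolStrict N A B Q R S H α P) {t : ℕ} (ht : t < N) (w : Fin m → ℝ) :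
    α * (w ⬝ᵥ w) ≤ w ⬝ᵥ lqHatR (B t) (R t) (P (t + 1)) *ᵥ w :=
  (posSemidef_sub_smul_one_iff (isSymm_lqHatR (hR t) (hP.1 (t + 1) ht)) α).1 (hP.2.2 t ht).1 w

theorem lqCost_eq_of_riccatiSolStrict (hR : ∀ t, (R t).IsSymm)
    (hP : riccatiSolStrict N A B Q R S H α P) (x₀ : Fin n → ℝ) (u : ℕ → Fin m → ℝ) :
    lqCost N A B Q R S H x₀ u = x₀ ⬝ᵥ P 0 *ᵥ x₀ + ∑ t ∈ range N,
      (u t - riccatiGainSeq A B R S P t *ᵥ lqState A B x₀ u t) ⬝ᵥ lqHatR (B t) (R t) (P (t + 1))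
        *ᵥ (u t - riccatiGainSeq A B R S P t *ᵥ lqState A B x₀ u t) :=
  lqCost_eq_add_sum hP.2.1 fun t ht => by
    rw [(hP.2.2 t ht).2.2]
    exact stageCost_add_eq_riccatiMap _ _ _ _ (hR t) (hP.1 (t + 1) ht) (hP.2.2 t ht).2.1 _ _

theorem lqCost_clControl_of_riccatiSolStrict (hR : ∀ t, (R t).IsSymm)
    (hP : riccatiSolStrict N A B Q R S H α P) (x₀ : Fin n → ℝ) :
    lqCost N A B Q R S H x₀ (clControl A B (riccatiGainSeq A B R S P) (fun _ => 0) x₀)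
      = x₀ ⬝ᵥ P 0 *ᵥ x₀ := by
  rw [lqCost_eq_of_riccatiSolStrict hR hP, lqState_clControl]
  simp [clControl]

theorem le_lqCost_of_riccatiSolStrict (hR : ∀ t, (R t).IsSymm) (hα : 0 ≤ α)
    (hP : riccatiSolStrict N A B Q R S H α P) (x₀ : Fin n → ℝ) (u : ℕ → Fin m → ℝ) :
    x₀ ⬝ᵥ P 0 *ᵥ x₀ ≤ lqCost N A B Q R S H x₀ u := by
  rw [lqCost_eq_of_riccatiSolStrict hR hP]
  exact le_add_of_nonneg_right <| sum_nonneg fun t ht =>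
    dotProduct_mulVec_nonneg_of_coercive hα (coercive_of_riccatiSolStrict hR hP (mem_range.1 ht)) _

theorem eq_riccatiGainSeq_mulVec_of_lqCost_le (hR : ∀ t, (R t).IsSymm) (hα : 0 < α)
    (hP : riccatiSolStrict N A B Q R S H α P) {x₀ : Fin n → ℝ} {u : ℕ → Fin m → ℝ}
    (h : lqCost N A B Q R S H x₀ u ≤ x₀ ⬝ᵥ P 0 *ᵥ x₀) {t : ℕ} (ht : t < N) :
    u t = riccatiGainSeq A B R S P t *ᵥ lqState A B x₀ u t := by
  rw [lqCost_eq_of_riccatiSolStrict hR hP] at h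
  have hcoer {s : ℕ} (hs : s ∈ range N) := coercive_of_riccatiSolStrict hR hP (mem_range.1 hs)
  have hnn := fun (s : ℕ) (hs : s ∈ range N) =>
    dotProduct_mulVec_nonneg_of_coercive hα.le (hcoer hs) (u s - riccatiGainSeq A B R S P s *ᵥ lqState A B x₀ u s)
  have hzero := (sum_eq_zero_iff_of_nonneg hnn).1 (le_antisymm (by linarith) (sum_nonneg hnn)) t
    (mem_range.2 ht)
  exact sub_eq_zero.1 (eq_zero_of_coercive hα (hcoer (mem_range.2 ht)) hzero.le)

end Solution

end Horizon

end LQ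

open LQ

theorem stmt_7_general {n m : ℕ} (N : ℕ)
    (A : ℕ → Matrix (Fin n) (Fin n) ℝ) (B : ℕ → Matrix (Fin n) (Fin m) ℝ)
    (Q : ℕ → Matrix (Fin n) (Fin n) ℝ) (R : ℕ → Matrix (Fin m) (Fin m) ℝ)
    (S : ℕ → Matrix (Fin m) (Fin n) ℝ) (H : Matrix (Fin n) (Fin n) ℝ)
    (hQ : ∀ t, (Q t).IsSymm) (hR : ∀ t, (R t).IsSymm) (hH : H.IsSymm)
    (α : ℝ) (hα : 0 < α)
    (hcoer : ∀ u : ℕ → Fin m → ℝ,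
      α * ∑ t ∈ range N, u t ⬝ᵥ u t ≤ lqCost N A B Q R S H 0 u) :
    ∃ P : ℕ → Matrix (Fin n) (Fin n) ℝ,
      riccatiSolStrict N A B Q R S H α P ∧
      (∀ P' : ℕ → Matrix (Fin n) (Fin n) ℝ,
        riccatiSolStrict N A B Q R S H α P' → ∀ t ≤ N, P' t = P t) ∧
      (let K : ℕ → Matrix (Fin m) (Fin n) ℝ := fun t =>
          -((R t + (B t)ᵀ * P (t + 1) * B t)⁻¹ * ((B t)ᵀ * P (t + 1) * A t + S t))
       (∀ x₀ : Fin n → ℝ, ∀ u : ℕ → Fin m → ℝ,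
          lqCost N A B Q R S H x₀ (clControl A B K (fun _ => 0) x₀)
            ≤ lqCost N A B Q R S H x₀ u) ∧
       (∀ x₀ : Fin n → ℝ, ∀ ubar : ℕ → Fin m → ℝ,
          (∀ u : ℕ → Fin m → ℝ,
            lqCost N A B Q R S H x₀ ubar ≤ lqCost N A B Q R S H x₀ u) →
          ∀ t < N, ubar t = clControl A B K (fun _ => 0) x₀ t)) := by
  set P := riccatiSeq N A B Q R S H
  have hP : riccatiSolStrict N A B Q R S H α P := riccatiSolStrict_riccatiSeq hQ hR hH hα hcoer
  have hcl := lqCost_clControl_of_riccatiSolStrict hR hP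
  refine ⟨P, hP, fun P' hP' t ht => eq_of_riccatiSolStrict hP hP' ht,
    fun x₀ u => (hcl x₀).trans_le (le_lqCost_of_riccatiSolStrict hR hα.le hP x₀ u), ?_⟩
  intro x₀ ubar hopt t ht
  have hfb {s : ℕ} (hs : s < N) :=
    eq_riccatiGainSeq_mulVec_of_lqCost_le hR hα hP ((hopt _).trans_eq (hcl x₀)) hs
  have hstate := lqState_eq_clState (v := fun _ => 0) fun s hs => (hfb hs).trans (add_zero _).symm
  rw [hfb ht, hstate t ht.le]
  exact (add_zero _).symm

/-- Lemma 3 part (3): under uniform convexity of `J(0,·)`, the Riccati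
equation has a unique solution with `R̂_t ⪰ αI`; the induced feedback `(K*, 0)` is a
closed-loop optimal solution and its outcome is the unique open-loop optimal control. -/
theorem stmt_7 {n m : ℕ} (hn : 0 < n) (hm : 0 < m) (N : ℕ) (hN : 0 < N)
    (A : ℕ → Matrix (Fin n) (Fin n) ℝ) (B : ℕ → Matrix (Fin n) (Fin m) ℝ)
    (Q : ℕ → Matrix (Fin n) (Fin n) ℝ) (R : ℕ → Matrix (Fin m) (Fin m) ℝ)
    (S : ℕ → Matrix (Fin m) (Fin n) ℝ) (H : Matrix (Fin n) (Fin n) ℝ)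
    (hQ : ∀ t, (Q t).IsSymm) (hR : ∀ t, (R t).IsSymm) (hH : H.IsSymm)
    (α : ℝ) (hα : 0 < α)
    (hcoer : ∀ u : ℕ → Fin m → ℝ,
      α * ∑ t ∈ range N, u t ⬝ᵥ u t ≤ lqCost N A B Q R S H 0 u) :
    ∃ P : ℕ → Matrix (Fin n) (Fin n) ℝ,
      riccatiSolStrict N A B Q R S H α P ∧
      (∀ P' : ℕ → Matrix (Fin n) (Fin n) ℝ,
        riccatiSolStrict N A B Q R S H α P' → ∀ t ≤ N, P' t = P t) ∧
      (let K : ℕ → Matrix (Fin m) (Fin n) ℝ := fun t =>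
          -((R t + (B t)ᵀ * P (t + 1) * B t)⁻¹ * ((B t)ᵀ * P (t + 1) * A t + S t))
       (∀ x₀ : Fin n → ℝ, ∀ u : ℕ → Fin m → ℝ,
          lqCost N A B Q R S H x₀ (clControl A B K (fun _ => 0) x₀)
            ≤ lqCost N A B Q R S H x₀ u) ∧
       (∀ x₀ : Fin n → ℝ, ∀ ubar : ℕ → Fin m → ℝ,
          (∀ u : ℕ → Fin m → ℝ,
            lqCost N A B Q R S H x₀ ubar ≤ lqCost N A B Q R S H x₀ u) →
          ∀ t < N, ubar t = clControl A B K (fun _ => 0) x₀ t)) :=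
  stmt_7_general N A B Q R S H hQ hR hH α hα hcoer
end
end
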